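/- arXiv:2301.09196 — 2 statements merged into one kernel-verified Lean document; each statement's English description precedes it below -/
import Mathlib

section
/- Let ε > 0 and m ≥ 2 an integer, ζ a primitive m-th root of unity in ℂ, and y a random variable valued in ℤ/mℤ such that P(y = s) ≤ 1 − ε for every s ∈ ℤ/mℤ. Then |E(ζ^y)| ≤ exp(−ε/m²). -/
/-!
Write `pₛ = P(y = s)`. Expanding `‖∑ pₛ ζ^s‖² = ∑ pₛ pₜ ⟪ζ^s, ζ^t⟫`, each off-diagonal term
`⟪ζ^s, ζ^t⟫ = 1 - ‖ζ^s - ζ^t‖² / 2` is at most `1 - 2/m²`, since two distinct `m`-th roots of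
unity are at distance at least `2/m`. Hence
`‖E ζ^y‖² ≤ 1 - (2/m²)(1 - ∑ pₛ²) ≤ 1 - 2ε/m² ≤ exp(-2ε/m²)`.
-/

open Finset

theorem norm_one_sub_pow_le {R : Type*} [NormedRing R] [NormOneClass R] {z : R} (hz : ‖z‖ ≤ 1)
    (j : ℕ) : ‖1 - z ^ j‖ ≤ j * ‖1 - z‖ := by
  have hgeom : 1 - z ^ j = (∑ i ∈ range j, z ^ i) * (1 - z) := by
    rw [← neg_sub, ← geom_sum_mul, ← mul_neg, neg_sub]
  calc ‖1 - z ^ j‖ ≤ ‖∑ i ∈ range j, z ^ i‖ * ‖1 - z‖ := hgeom ▸ norm_mul_le _ _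
    _ ≤ (∑ _i ∈ range j, (1 : ℝ)) * ‖1 - z‖ := by
      gcongr
      exact (norm_sum_le _ _).trans <| sum_le_sum fun i _ =>
        (norm_pow_le z i).trans (pow_le_one₀ (norm_nonneg z) hz)
    _ = j * ‖1 - z‖ := by simp

/-- The `m`-th roots of unity `z^j`, `j < m`, sum to zero, so `m = ∑ (1 - z^j)`, whose norm is
at most `m (m - 1) / 2 · ‖1 - z‖`. -/
theorem Complex.two_div_le_norm_one_sub_of_pow_eq_one {m : ℕ} {z : ℂ} (hz : z ^ m = 1)
    (hz1 : z ≠ 1) : 2 / (m : ℝ) ≤ ‖1 - z‖ := by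
  rcases Nat.eq_zero_or_pos m with rfl | hm
  · simp
  have hnorm : ‖z‖ = 1 := Complex.norm_eq_one_of_pow_eq_one hz hm.ne'
  have hsum : ∑ j ∈ range m, (1 - z ^ j) = m := by
    rw [sum_sub_distrib, geom_sum_eq hz1, hz, sub_self, zero_div, sub_zero]
    simp
  have hgauss : (∑ j ∈ range m, (j : ℝ)) * 2 = m * (m - 1) := by
    have h := congrArg (Nat.cast : ℕ → ℝ) (sum_range_id_mul_two m)
    push_cast [Nat.cast_sub hm] at h
    exact h
  have hbound : (m : ℝ) ≤ (∑ j ∈ range m, (j : ℝ)) * ‖1 - z‖ := by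
    calc (m : ℝ) = ‖∑ j ∈ range m, (1 - z ^ j)‖ := by simp [hsum]
      _ ≤ ∑ j ∈ range m, ‖1 - z ^ j‖ := norm_sum_le _ _
      _ ≤ ∑ j ∈ range m, (j : ℝ) * ‖1 - z‖ :=
        sum_le_sum fun j _ => norm_one_sub_pow_le hnorm.le j
      _ = (∑ j ∈ range m, (j : ℝ)) * ‖1 - z‖ := (sum_mul ..).symm
  have hm' : (0 : ℝ) < m := by exact_mod_cast hm
  have hmul : (m : ℝ) * 2 ≤ m * (‖1 - z‖ * m) :=
    calc (m : ℝ) * 2 ≤ (∑ j ∈ range m, (j : ℝ)) * 2 * ‖1 - z‖ := by linarith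
      _ = m * (m - 1) * ‖1 - z‖ := by rw [hgauss]
      _ ≤ m * (‖1 - z‖ * m) := by nlinarith [norm_nonneg (1 - z)]
  rw [div_le_iff₀ hm']
  exact le_of_mul_le_mul_left hmul hm'

theorem Complex.inner_le_one_sub_of_pow_eq_one {m : ℕ} (hm : m ≠ 0) {z w : ℂ} (hz : z ^ m = 1)
    (hw : w ^ m = 1) (hzw : z ≠ w) : inner ℝ z w ≤ 1 - 2 / (m : ℝ) ^ 2 := by
  have hwnorm : ‖w‖ = 1 := Complex.norm_eq_one_of_pow_eq_one hw hm
  have hw0 : w ≠ 0 := norm_ne_zero_iff.mp (by simp [hwnorm])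
  have hdist : 2 / (m : ℝ) ≤ ‖z - w‖ := by
    have hdiv : (z / w) ^ m = 1 := by rw [div_pow, hz, hw, div_one]
    have hdiv1 : z / w ≠ 1 := fun h => hzw ((div_eq_one_iff_eq hw0).mp h)
    calc 2 / (m : ℝ) ≤ ‖1 - z / w‖ := two_div_le_norm_one_sub_of_pow_eq_one hdiv hdiv1
      _ = ‖z - w‖ := by
        rw [show z - w = (z / w - 1) * w by field_simp, norm_mul, hwnorm, mul_one, norm_sub_rev]
  have hsq : (2 / (m : ℝ)) ^ 2 ≤ ‖z - w‖ ^ 2 := pow_le_pow_left₀ (by positivity) hdist 2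
  rw [norm_sub_sq_real, Complex.norm_eq_one_of_pow_eq_one hz hm, hwnorm] at hsq
  linarith [show (2 / (m : ℝ)) ^ 2 = 2 * (2 / (m : ℝ) ^ 2) by ring]

theorem norm_sum_smul_sq_le {E ι : Type*} [NormedAddCommGroup E] [InnerProductSpace ℝ E]
    [Fintype ι] [DecidableEq ι] {p : ι → ℝ} {w : ι → E} {c : ℝ} (hp : ∀ i, 0 ≤ p i)
    (hp1 : ∑ i, p i = 1) (hw : ∀ i, ‖w i‖ ≤ 1)
    (hinner : ∀ i j, i ≠ j → inner ℝ (w i) (w j) ≤ 1 - c) :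
    ‖∑ i, p i • w i‖ ^ 2 ≤ 1 - c + c * ∑ i, p i ^ 2 := by
  have hterm : ∀ i j, p i * p j * inner ℝ (w i) (w j) ≤
      (1 - c) * (p i * p j) + c * (if i = j then p i * p j else 0) := by
    intro i j
    have hpp : 0 ≤ p i * p j := mul_nonneg (hp i) (hp j)
    split_ifs with hij
    · subst hij
      have : inner ℝ (w i) (w i) ≤ 1 := by
        rw [real_inner_self_eq_norm_sq]; exact pow_le_one₀ (norm_nonneg _) (hw i)
      nlinarith
    · nlinarith [hinner i j hij]
  calc ‖∑ i, p i • w i‖ ^ 2 = ∑ i, ∑ j, p i * p j * inner ℝ (w i) (w j) := by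
        simp only [← real_inner_self_eq_norm_sq, sum_inner, inner_sum, real_inner_smul_left,
          real_inner_smul_right]
        exact sum_congr rfl fun i _ => sum_congr rfl fun j _ => by rw [real_inner_comm]; ring
    _ ≤ ∑ i, ∑ j, ((1 - c) * (p i * p j) + c * (if i = j then p i * p j else 0)) :=
        sum_le_sum fun i _ => sum_le_sum fun j _ => hterm i j
    _ = 1 - c + c * ∑ i, p i ^ 2 := by
        simp [sum_add_distrib, ← mul_sum, hp1, sq]

theorem sum_sq_le_of_forall_le {ι : Type*} [Fintype ι] {p : ι → ℝ} {a : ℝ} (hp : ∀ i, 0 ≤ p i)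
    (hp1 : ∑ i, p i = 1) (hpa : ∀ i, p i ≤ a) : ∑ i, p i ^ 2 ≤ a :=
  calc ∑ i, p i ^ 2 ≤ ∑ i, p i * a := sum_le_sum fun i _ => by nlinarith [hp i, hpa i]
    _ = a := by rw [← sum_mul, hp1, one_mul]

theorem PMF.sum_toReal_eq_one {α : Type*} [Fintype α] (y : PMF α) : ∑ a, (y a).toReal = 1 := by
  have h := y.tsum_coe
  rw [tsum_fintype] at h
  rw [← ENNReal.toReal_sum fun a _ => y.apply_ne_top a, h, ENNReal.toReal_one]

theorem stmt_0_general (ε : ℝ) (m : ℕ) [NeZero m]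
    (ζ : ℂ) (hζ : IsPrimitiveRoot ζ m)
    (y : PMF (ZMod m))
    (hy : ∀ s : ZMod m, (y s).toReal ≤ 1 - ε) :
    ‖∑ s : ZMod m, (y s).toReal • ζ ^ (s.val)‖ ≤
      Real.exp (-ε / (m : ℝ) ^ 2) := by
  have hroot : ∀ s : ZMod m, (ζ ^ s.val) ^ m = 1 := fun s => by
    rw [pow_right_comm, hζ.pow_eq_one, one_pow]
  have hinner : ∀ s t : ZMod m, s ≠ t →
      inner ℝ (ζ ^ s.val) (ζ ^ t.val) ≤ 1 - 2 / (m : ℝ) ^ 2 :=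
    fun s t hst => Complex.inner_le_one_sub_of_pow_eq_one (NeZero.ne m) (hroot s) (hroot t)
      fun h => hst (ZMod.val_injective m (hζ.pow_inj s.val_lt t.val_lt h))
  have hsq := norm_sum_smul_sq_le (fun s => ENNReal.toReal_nonneg) y.sum_toReal_eq_one
    (fun s => (Complex.norm_eq_one_of_pow_eq_one (hroot s) (NeZero.ne m)).le) hinner
  have hp2 := sum_sq_le_of_forall_le (fun s => ENNReal.toReal_nonneg) y.sum_toReal_eq_one hy
  set c := 2 / (m : ℝ) ^ 2 with hc
  have hc0 : 0 ≤ c := by positivity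
  refine (pow_le_pow_iff_left₀ (norm_nonneg _) (Real.exp_pos _).le two_ne_zero).mp ?_
  calc _ ≤ 1 - c + c * (1 - ε) := hsq.trans (by gcongr)
    _ ≤ Real.exp (-(c * ε)) := by linarith [Real.add_one_le_exp (-(c * ε))]
    _ = Real.exp (-ε / (m : ℝ) ^ 2) ^ 2 := by rw [← Real.exp_nat_mul, hc]; ring_nf

/-- If `ζ` is a primitive `m`-th root of unity (`m ≥ 2`) and `y` is a
random variable valued in `ℤ/mℤ` (given by its distribution, a `PMF`) which is
`ε`-nonconstant, i.e. `P(y = s) ≤ 1 - ε` for all `s`, then `|E(ζ^y)| ≤ exp(-ε/m²)`. -/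
theorem stmt_0 (ε : ℝ) (hε : 0 < ε) (m : ℕ) [NeZero m] (hm : 2 ≤ m)
    (ζ : ℂ) (hζ : IsPrimitiveRoot ζ m)
    (y : PMF (ZMod m))
    (hy : ∀ s : ZMod m, (y s).toReal ≤ 1 - ε) :
    ‖∑ s : ZMod m, (y s).toReal • ζ ^ (s.val)‖ ≤
      Real.exp (-ε / (m : ℝ) ^ 2) :=
  stmt_0_general ε m ζ hζ y hy
end

section
/- Let R be a finite commutative ring, N a finite R-module, V = Rⁿ, F ∈ Hom_R(V, N), and C : N → ℤ/mℤ a nonzero additive homomorphism, where m = |R|. Suppose F is a code of distance δn. Then there are at least δn indices j ∈ [n] such that the additive homomorphism R → ℤ/mℤ given by x ↦ C(F(v_j) x) is nonzero, where v_j is the j-th standard basis vector. -/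
/-- `V_σ`: the submodule of `Rⁿ` generated by the standard basis vectors `v_i`
with `i ∉ σ`. -/
def distSubmodule (R : Type*) [CommRing R] (n : ℕ) (σ : Finset (Fin n)) :
    Submodule R (Fin n → R) :=
  Submodule.span R {v | ∃ i ∉ σ, v = Pi.single i 1}

/-- `F` is a code of distance `w` if `F(V_σ) = N` for all `σ` with `|σ| < w`. -/
def IsCode {R : Type*} [CommRing R] {n : ℕ} {N : Type*} [AddCommGroup N]
    [Module R N] (F : (Fin n → R) →ₗ[R] N) (w : ℝ) : Prop :=
  ∀ σ : Finset (Fin n), (σ.card : ℝ) < w →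
    Submodule.map F (distSubmodule R n σ) = ⊤

/-!
If `C ∘ F` vanished on `R v_j` for all `j` outside a set `σ` with `|σ| < δn`, it would vanish on
`V_σ`, which `F` maps onto `N`; so `C = 0`.
-/

section

variable {R : Type*} [CommRing R] {n : ℕ} {A : Type*} [AddCommGroup A]

/-- The additive hypothesis suffices because `V_σ` is additively generated by the `Pi.single i x`,
`i ∉ σ`; the span induction carries the scalar along. -/
theorem AddMonoidHom.eq_zero_of_mem_distSubmodule {σ : Finset (Fin n)}
    (g : (Fin n → R) →+ A) (hg : ∀ i ∉ σ, ∀ x : R, g (Pi.single i x) = 0)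
    {v : Fin n → R} (hv : v ∈ distSubmodule R n σ) : g v = 0 := by
  suffices ∀ r : R, g (r • v) = 0 by simpa using this 1
  induction hv using Submodule.span_induction with
  | mem _ hw =>
    obtain ⟨i, hi, rfl⟩ := hw
    intro r
    simpa only [← Pi.single_smul, smul_eq_mul, mul_one] using hg i hi r
  | zero => simp
  | add _ _ _ _ hx hy => intro r; rw [smul_add, map_add, hx, hy, add_zero]
  | smul s _ _ hx => intro r; rw [smul_smul]; exact hx (r * s)

theorem AddMonoidHom.eq_zero_of_map_distSubmodule_eq_top {N : Type*} [AddCommGroup N]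
    [Module R N] {F : (Fin n → R) →ₗ[R] N} {σ : Finset (Fin n)}
    (hσ : Submodule.map F (distSubmodule R n σ) = ⊤) (C : N →+ A)
    (hC : ∀ i ∉ σ, ∀ x : R, C (F (Pi.single i x)) = 0) : C = 0 := by
  ext y
  obtain ⟨v, hv, rfl⟩ : y ∈ Submodule.map F (distSubmodule R n σ) := hσ ▸ Submodule.mem_top
  exact (C.comp F.toAddMonoidHom).eq_zero_of_mem_distSubmodule hC hv

end

theorem stmt_5_general (R : Type*) [CommRing R]
    {N : Type*} [AddCommGroup N] [Module R N]
    (n : ℕ) (δ : ℝ)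
    (F : (Fin n → R) →ₗ[R] N) (hcode : IsCode F (δ * n))
    (C : N →+ ZMod (Nat.card R)) (hC : C ≠ 0) :
    δ * n ≤ ({j : Fin n | ∃ x : R, C (F (Pi.single j x)) ≠ 0}.ncard : ℝ) := by
  set S := {j : Fin n | ∃ x : R, C (F (Pi.single j x)) ≠ 0}
  by_contra! hS
  have hσ := hcode S.toFinite.toFinset (by rwa [← Set.ncard_eq_toFinset_card S])
  refine hC (AddMonoidHom.eq_zero_of_map_distSubmodule_eq_top hσ C fun i hi x => ?_)
  by_contra hx
  exact hi (S.toFinite.mem_toFinset.mpr ⟨x, hx⟩)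

/-- If `R` is a finite commutative ring, `N` a finite `R`-module,
`F ∈ Hom_R(Rⁿ, N)` a code of distance `δn`, and `C : N → ℤ/mℤ` (with `m = |R|`)
a nonzero additive homomorphism, then there are at least `δn` indices `j` such
that the additive map `x ↦ C(F(v_j)·x)` (i.e. `x ↦ C(F(Pi.single j x))`) is
nonzero. -/
theorem stmt_5 (R : Type*) [CommRing R] [Finite R]
    {N : Type*} [AddCommGroup N] [Module R N] [Finite N]
    (n : ℕ) (δ : ℝ) (hδ : 0 < δ)
    (F : (Fin n → R) →ₗ[R] N) (hcode : IsCode F (δ * n))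
    (C : N →+ ZMod (Nat.card R)) (hC : C ≠ 0) :
    δ * n ≤ ({j : Fin n | ∃ x : R, C (F (Pi.single j x)) ≠ 0}.ncard : ℝ) :=
  stmt_5_general R n δ F hcode C hC
end
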